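/- (Correctness of the Lee-weight FCLC construction, odd q) Let q ≥ 5 be odd and t ≤ (q−3)/2. For u ∈ Z_q^k let f(u) = w_L(u) and define the parity symbol p_{f(u)} = 2·f(u) mod q. Then for all u, u' ∈ Z_q^k with f(u) ≠ f(u'), d_L(u, u') + t·d_L(p_{f(u)}, p_{f(u')}) ≥ 2t+1, where d_L on symbols is the Lee distance in Z_q. -/

import Mathlib

/-- Lee distance between two symbols of `ZMod q` (representatives in `{0,…,q-1}`). -/
def leeDistSym (q : ℕ) (x y : ZMod q) : ℕ := min (x - y).val (y - x).val

/-- Lee distance between two vectors over `ZMod q`. -/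
def leeDist {q n : ℕ} (x y : Fin n → ZMod q) : ℕ := ∑ i, leeDistSym q (x i) (y i)

/-- Lee weight of a symbol of `ZMod q`. -/
def leeWtSym (q : ℕ) (x : ZMod q) : ℕ := min x.val (q - x.val)

/-- Lee weight of a vector over `ZMod q`. -/
def leeWt {q n : ℕ} (x : Fin n → ZMod q) : ℕ := ∑ i, leeWtSym q (x i)


/-!
The Lee weight is the absolute value of the centred representative `ZMod.valMinAbs`, so it
satisfies the triangle inequality and `|w_L(u) - w_L(u')| ≤ d_L(u, u')`. With `c = w_L(u) - w_L(u')`,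
the parity symbols are at Lee distance `w_L(2c)`. For odd `q`, `2c ≡ 0` forces `q ∣ c`, and
`2c ≡ ±1` forces `|c| ≥ (q - 1) / 2`; otherwise the parity part alone contributes `2t`.
-/

lemma leeDistSym_comm {q : ℕ} (x y : ZMod q) : leeDistSym q x y = leeDistSym q y x :=
  min_comm _ _

lemma leeDist_comm {q n : ℕ} (x y : Fin n → ZMod q) : leeDist x y = leeDist y x :=
  Finset.sum_congr rfl fun i _ => leeDistSym_comm (x i) (y i)

section LeeWeight

variable {q : ℕ} [NeZero q]

lemma leeWtSym_eq_natAbs_valMinAbs (x : ZMod q) : leeWtSym q x = x.valMinAbs.natAbs :=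
  (ZMod.valMinAbs_natAbs_eq_min x).symm

lemma leeWtSym_add_le (x y : ZMod q) : leeWtSym q (x + y) ≤ leeWtSym q x + leeWtSym q y := by
  simp only [leeWtSym_eq_natAbs_valMinAbs]
  exact (ZMod.natAbs_valMinAbs_add_le x y).trans (Int.natAbs_add_le _ _)

lemma leeDistSym_eq_leeWtSym_sub (x y : ZMod q) : leeDistSym q x y = leeWtSym q (x - y) := by
  rw [leeDistSym, leeWtSym, ← neg_sub x y, ZMod.neg_val]
  split_ifs with h <;> simp [h]

lemma leeWt_le_leeWt_add_leeDist {n : ℕ} (x y : Fin n → ZMod q) :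
    leeWt x ≤ leeWt y + leeDist x y := by
  rw [leeWt, leeWt, leeDist, ← Finset.sum_add_distrib]
  refine Finset.sum_le_sum fun i _ => ?_
  rw [leeDistSym_eq_leeWtSym_sub]
  simpa using leeWtSym_add_le (y i) (x i - y i)

lemma natAbs_sub_leeWt_le_leeDist {n : ℕ} (x y : Fin n → ZMod q) :
    ((leeWt x : ℤ) - leeWt y).natAbs ≤ leeDist x y := by
  have hxy := leeWt_le_leeWt_add_leeDist x y
  have hyx := leeWt_le_leeWt_add_leeDist y x
  rw [leeDist_comm] at hyx
  omega

lemma dvd_of_leeWtSym_two_mul_eq_zero (hq : Odd q) {c : ℤ}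
    (h : leeWtSym q ((2 * c : ℤ) : ZMod q) = 0) : (q : ℤ) ∣ c := by
  rw [leeWtSym_eq_natAbs_valMinAbs, Int.natAbs_eq_zero, ZMod.valMinAbs_eq_zero,
    ZMod.intCast_zmod_eq_zero_iff_dvd] at h
  have hcop : IsCoprime (q : ℤ) 2 := by
    rw [Int.isCoprime_iff_gcd_eq_one]
    exact Int.gcd_comm _ _ ▸ (Nat.coprime_two_left.mpr hq)
  exact hcop.dvd_of_dvd_mul_left h

lemma sub_one_div_two_le_natAbs_of_leeWtSym_two_mul_eq_one {c : ℤ}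
    (h : leeWtSym q ((2 * c : ℤ) : ZMod q) = 1) : (q - 1) / 2 ≤ c.natAbs := by
  set ε := ((2 * c : ℤ) : ZMod q).valMinAbs with hε
  rw [leeWtSym_eq_natAbs_valMinAbs, ← hε] at h
  have hdvd : (q : ℤ) ∣ 2 * c - ε := by
    rw [← ZMod.intCast_zmod_eq_zero_iff_dvd, Int.cast_sub, hε, ZMod.coe_valMinAbs, sub_self]
  have hle := Int.natAbs_le_of_dvd_ne_zero hdvd (by omega)
  omega

end LeeWeight

lemma two_mul_add_one_le_natAbs_add_mul_leeWtSym {q t : ℕ} (hq : Odd q) (ht : t ≤ (q - 3) / 2)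
    {c : ℤ} (hc : c ≠ 0) : 2 * t + 1 ≤ c.natAbs + t * leeWtSym q ((2 * c : ℤ) : ZMod q) := by
  have : NeZero q := ⟨hq.pos.ne'⟩
  rcases hw : leeWtSym q ((2 * c : ℤ) : ZMod q) with _ | _ | w
  · have hqc := Int.natAbs_le_of_dvd_ne_zero (dvd_of_leeWtSym_two_mul_eq_zero hq hw) hc
    simp only [Int.natAbs_natCast] at hqc
    omega
  · have := sub_one_div_two_le_natAbs_of_leeWtSym_two_mul_eq_one hw
    omega
  · have : t * 2 ≤ t * (w + 1 + 1) := Nat.mul_le_mul_left t (by omega)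
    omega

theorem lee_weight_construction_correct_odd_general (q k t : ℕ)
    (hodd : Odd q) (ht : t ≤ (q - 3) / 2) (u u' : Fin k → ZMod q)
    (hne : leeWt u ≠ leeWt u') :
    2 * t + 1 ≤ leeDist u u' +
      t * leeDistSym q ((2 * leeWt u : ℕ) : ZMod q)
        ((2 * leeWt u' : ℕ) : ZMod q) := by
  have : NeZero q := ⟨hodd.pos.ne'⟩
  set c : ℤ := leeWt u - leeWt u' with hc
  have hc0 : c ≠ 0 := by omega
  have hparity : leeDistSym q ((2 * leeWt u : ℕ) : ZMod q) ((2 * leeWt u' : ℕ) : ZMod q) =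
      leeWtSym q ((2 * c : ℤ) : ZMod q) := by
    rw [leeDistSym_eq_leeWtSym_sub, hc]
    push_cast
    ring_nf
  calc 2 * t + 1 ≤ c.natAbs + t * leeWtSym q ((2 * c : ℤ) : ZMod q) :=
        two_mul_add_one_le_natAbs_add_mul_leeWtSym hodd ht hc0
    _ ≤ leeDist u u' + t * leeWtSym q ((2 * c : ℤ) : ZMod q) := by
        gcongr
        exact natAbs_sub_leeWt_le_leeDist u u'
    _ = _ := by rw [hparity]

theorem lee_weight_construction_correct_odd (q k t : ℕ) (hq5 : 5 ≤ q)
    (hodd : Odd q) (ht : t ≤ (q - 3) / 2) (u u' : Fin k → ZMod q)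
    (hne : leeWt u ≠ leeWt u') :
    2 * t + 1 ≤ leeDist u u' +
      t * leeDistSym q ((2 * leeWt u : ℕ) : ZMod q)
        ((2 * leeWt u' : ℕ) : ZMod q) :=
  lee_weight_construction_correct_odd_general q k t hodd ht u u' hne
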